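/- The pair (λ, μ) is a Lagrange multiplier for the minimization of H₁ over Z⁰_lin: μ ≥ 0 and inf over all ζ ∈ ℝ⁴ of the Lagrangian L₁(ζ) = H₁(ζ) + λ·c^⊤(ζ − ζ⁰(Σ)) − μ·ζ₄ equals −(ψ/2)·v^⊤ζ̃, the minimal value of H₁ over Z⁰_lin. -/

import Mathlib

/-!
Substituting `d = ζ - ζ⁰(Σ)` (note `ζ⁰(Σ)₄ = 0`), the Lagrangian is the separable quadratic
`(1/(2ψ)) dᵀΨ⁻¹d - wᵀd` with `w = v - λc + μe₄`, whose minimum `-(ψ/2) wᵀΨw` is attained at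
`d = ψΨw = ψζ̃`. The multipliers are chosen so that `ζ̃` is orthogonal to `c`, `ζ̃₄ ≥ 0` and
`μ ζ̃₄ = 0`; hence `wᵀΨw = vᵀζ̃`, the minimizer `ζ⁰(Σ) + ψζ̃` lies in `Z⁰_lin`, and there `H₁`
equals the Lagrangian. On `Z⁰_lin` the Lagrangian is below `H₁` since `μ ≥ 0`.
-/

open Finset

noncomputable section

namespace Stmt9

/-- The Euclidean norm of a vector in `ℝ^m`. -/
def enorm {m : ℕ} (z : Fin m → ℝ) : ℝ := Real.sqrt (∑ i, z i ^ 2)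

/-- The reference control `ζ⁰(Σ) = (0, Σ, 0, 0)`. -/
def zeta0 (Sig : ℝ) : Fin 4 → ℝ := ![0, Sig, 0, 0]

/-- The fourth standard basis vector `e₄` of `ℝ⁴`. -/
def e4 : Fin 4 → ℝ := fun i => if i = 3 then 1 else 0

/-- `c^⊤ Ψ v` for the diagonal matrix `Ψ = diag psi`. -/
def cPv (psi c v : Fin 4 → ℝ) : ℝ := ∑ i, c i * psi i * v i

/-- `c^⊤ Ψ c` for the diagonal matrix `Ψ = diag psi`. -/
def cPc (psi c : Fin 4 → ℝ) : ℝ := ∑ i, c i * psi i * c i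

/-- The Lagrange multiplier `λ`. -/
def lam (psi c v : Fin 4 → ℝ) : ℝ :=
  if 0 ≤ v 3 - cPv psi c v / cPc psi c * c 3 then cPv psi c v / cPc psi c
  else (cPv psi c v - c 3 * v 3 * psi 3) / (cPc psi c - c 3 ^ 2 * psi 3)

/-- The Lagrange multiplier `μ = max (-(v₄ - λ c₄)) 0`. -/
def mu (psi c v : Fin 4 → ℝ) : ℝ := max (-(v 3 - lam psi c v * c 3)) 0

/-- `ζ̃ = Ψ (v - λ c + μ e₄)`. -/
def zetaTilde (psi c v : Fin 4 → ℝ) : Fin 4 → ℝ := fun i =>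
  psi i * (v i - lam psi c v * c i + mu psi c v * e4 i)

/-- `H₁(ζ) = (1/(2ψ)) (ζ - ζ⁰(Σ))^⊤ Ψ⁻¹ (ζ - ζ⁰(Σ)) - v^⊤ (ζ - ζ⁰(Σ))`. -/
def H1 (Sig ψ : ℝ) (psi v : Fin 4 → ℝ) (z : Fin 4 → ℝ) : ℝ :=
  (1 / (2 * ψ)) * ∑ i, (z i - zeta0 Sig i) ^ 2 / psi i -
    ∑ i, v i * (z i - zeta0 Sig i)

theorem neg_mul_sq_le_sq_div_sub_mul {ψ p : ℝ} (hψ : 0 < ψ) (hp : 0 < p) (w d : ℝ) :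
    -(ψ * p / 2) * w ^ 2 ≤ 1 / (2 * ψ) * (d ^ 2 / p) - w * d := by
  have hsq : 1 / (2 * ψ) * (d ^ 2 / p) - w * d - (-(ψ * p / 2) * w ^ 2) =
      (d - ψ * p * w) ^ 2 / (2 * ψ * p) := by
    field_simp
    ring
  have : 0 ≤ (d - ψ * p * w) ^ 2 / (2 * ψ * p) := by positivity
  linarith

section DiagQuadratic

variable {ι : Type*} [Fintype ι]

def diagQuadratic (ψ : ℝ) (p w d : ι → ℝ) : ℝ :=
  1 / (2 * ψ) * ∑ i, d i ^ 2 / p i - ∑ i, w i * d i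

theorem le_diagQuadratic {ψ : ℝ} (hψ : 0 < ψ) {p : ι → ℝ} (hp : ∀ i, 0 < p i) (w d : ι → ℝ) :
    -(ψ / 2) * ∑ i, p i * w i ^ 2 ≤ diagQuadratic ψ p w d := by
  have hterm i := neg_mul_sq_le_sq_div_sub_mul hψ (hp i) (w i) (d i)
  calc -(ψ / 2) * ∑ i, p i * w i ^ 2 = ∑ i, -(ψ * p i / 2) * w i ^ 2 := by
        rw [Finset.mul_sum]; congr 1; ext i; ring
    _ ≤ ∑ i, (1 / (2 * ψ) * (d i ^ 2 / p i) - w i * d i) := Finset.sum_le_sum fun i _ => hterm i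
    _ = diagQuadratic ψ p w d := by
        rw [diagQuadratic, Finset.sum_sub_distrib, Finset.mul_sum]

theorem diagQuadratic_at_minimizer {ψ : ℝ} (hψ : ψ ≠ 0) {p : ι → ℝ} (hp : ∀ i, p i ≠ 0)
    (w : ι → ℝ) :
    diagQuadratic ψ p w (fun i => ψ * (p i * w i)) = -(ψ / 2) * ∑ i, p i * w i ^ 2 := by
  have hquad i : (ψ * (p i * w i)) ^ 2 / p i = ψ ^ 2 * (p i * w i ^ 2) := by
    field_simp [hp i]
  have hlin i : w i * (ψ * (p i * w i)) = ψ * (p i * w i ^ 2) := by ring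
  simp only [diagQuadratic, hquad, hlin, ← Finset.mul_sum]
  field_simp
  ring

end DiagQuadratic

def lagrangian (Sig ψ : ℝ) (psi c v : Fin 4 → ℝ) (z : Fin 4 → ℝ) : ℝ :=
  H1 Sig ψ psi v z + lam psi c v * (∑ i, c i * (z i - zeta0 Sig i)) - mu psi c v * z 3

def shiftedV (psi c v : Fin 4 → ℝ) : Fin 4 → ℝ := fun i =>
  v i - lam psi c v * c i + mu psi c v * e4 i

theorem zetaTilde_eq_mul_shiftedV (psi c v : Fin 4 → ℝ) (i : Fin 4) :
    zetaTilde psi c v i = psi i * shiftedV psi c v i := rfl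

theorem lagrangian_eq_diagQuadratic (Sig ψ : ℝ) (psi c v z : Fin 4 → ℝ) :
    lagrangian Sig ψ psi c v z = diagQuadratic ψ psi (shiftedV psi c v) (z - zeta0 Sig) := by
  simp [lagrangian, H1, diagQuadratic, shiftedV, Fin.sum_univ_four, e4, zeta0]
  ring

theorem sum_mul_e4 (f : Fin 4 → ℝ) : ∑ i, f i * e4 i = f 3 := by
  simp [e4]

theorem mu_nonneg (psi c v : Fin 4 → ℝ) : 0 ≤ mu psi c v := le_max_right _ _

theorem zetaTilde_three (psi c v : Fin 4 → ℝ) :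
    zetaTilde psi c v 3 = psi 3 * (v 3 - lam psi c v * c 3 + mu psi c v) := by
  simp [zetaTilde, e4]

theorem zetaTilde_three_nonneg {psi : Fin 4 → ℝ} (hpsi : 0 ≤ psi 3) (c v : Fin 4 → ℝ) :
    0 ≤ zetaTilde psi c v 3 := by
  rw [zetaTilde_three]
  refine mul_nonneg hpsi ?_
  rcases le_total 0 (v 3 - lam psi c v * c 3) with h | h
  · linarith [mu_nonneg psi c v]
  · rw [mu, max_eq_left (by linarith)]
    linarith

theorem mu_mul_zetaTilde_three (psi c v : Fin 4 → ℝ) :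
    mu psi c v * zetaTilde psi c v 3 = 0 := by
  rw [zetaTilde_three]
  rcases le_total 0 (v 3 - lam psi c v * c 3) with h | h
  · rw [mu, max_eq_right (by linarith)]
    ring
  · rw [mu, max_eq_left (by linarith)]
    ring

theorem cPc_sub_pos {psi : Fin 4 → ℝ} (hpsi : ∀ i, 0 < psi i) {c : Fin 4 → ℝ} (hc : c 0 ≠ 0) :
    0 < cPc psi c - c 3 ^ 2 * psi 3 := by
  simp only [cPc, Fin.sum_univ_four]
  nlinarith [mul_pos (hpsi 0) (mul_self_pos.mpr hc),
    mul_nonneg (hpsi 1).le (mul_self_nonneg (c 1)),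
    mul_nonneg (hpsi 2).le (mul_self_nonneg (c 2))]

/-- `λ` is chosen so that `ζ̃` satisfies the linearized constraint: in the second branch
`μ = λ c₄ - v₄`, and `λ` solves the resulting linear equation. -/
theorem sum_mul_zetaTilde_eq_zero {psi : Fin 4 → ℝ} (hpsi : ∀ i, 0 < psi i) {c : Fin 4 → ℝ}
    (hc : c 0 ≠ 0) (v : Fin 4 → ℝ) :
    ∑ i, c i * zetaTilde psi c v i = 0 := by
  have hexpand : ∑ i, c i * zetaTilde psi c v i =
      cPv psi c v - lam psi c v * cPc psi c + mu psi c v * (c 3 * psi 3) := by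
    simp [zetaTilde, cPv, cPc, e4, Fin.sum_univ_four]
    ring
  have hsub := cPc_sub_pos hpsi hc
  have hA : 0 < cPc psi c := by nlinarith [sq_nonneg (c 3), hpsi 3]
  rw [hexpand]
  by_cases h : 0 ≤ v 3 - cPv psi c v / cPc psi c * c 3
  · have hlam : lam psi c v = cPv psi c v / cPc psi c := if_pos h
    have hmu : mu psi c v = 0 := by
      rw [mu, hlam]
      exact max_eq_right (by linarith)
    rw [hlam, hmu]
    field_simp
    ring
  · have hlam : lam psi c v =
        (cPv psi c v - c 3 * v 3 * psi 3) / (cPc psi c - c 3 ^ 2 * psi 3) := if_neg h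
    have hneg : v 3 * cPc psi c - c 3 * cPv psi c v < 0 := by
      rw [not_le, sub_neg, div_mul_eq_mul_div, lt_div_iff₀ hA] at h
      linarith
    have hsign : v 3 - lam psi c v * c 3 ≤ 0 := by
      rw [show v 3 - lam psi c v * c 3 =
        (v 3 * cPc psi c - c 3 * cPv psi c v) / (cPc psi c - c 3 ^ 2 * psi 3) by
          rw [hlam]; field_simp; ring]
      exact (div_neg_of_neg_of_pos hneg hsub).le
    have hmu : mu psi c v = -(v 3 - lam psi c v * c 3) := max_eq_left (by linarith)
    rw [hmu, hlam]
    field_simp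
    ring

theorem sum_mul_shiftedV_sq {psi : Fin 4 → ℝ} (hpsi : ∀ i, 0 < psi i) {c : Fin 4 → ℝ}
    (hc : c 0 ≠ 0) (v : Fin 4 → ℝ) :
    ∑ i, psi i * shiftedV psi c v i ^ 2 = ∑ i, v i * zetaTilde psi c v i := by
  have horth := sum_mul_zetaTilde_eq_zero hpsi hc v
  have hcompl := mu_mul_zetaTilde_three psi c v
  calc ∑ i, psi i * shiftedV psi c v i ^ 2
      = ∑ i, (v i * zetaTilde psi c v i - lam psi c v * (c i * zetaTilde psi c v i) +
          mu psi c v * (zetaTilde psi c v i * e4 i)) := by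
        congr 1; ext i; rw [zetaTilde_eq_mul_shiftedV, shiftedV]; ring
    _ = ∑ i, v i * zetaTilde psi c v i - lam psi c v * ∑ i, c i * zetaTilde psi c v i +
          mu psi c v * ∑ i, zetaTilde psi c v i * e4 i := by
        rw [Finset.sum_add_distrib, Finset.sum_sub_distrib, Finset.mul_sum, Finset.mul_sum]
    _ = ∑ i, v i * zetaTilde psi c v i := by
        rw [horth, sum_mul_e4, hcompl]; ring

def zetaStar (Sig ψ : ℝ) (psi c v : Fin 4 → ℝ) : Fin 4 → ℝ := zeta0 Sig + ψ • zetaTilde psi c v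

theorem zetaStar_three (Sig ψ : ℝ) (psi c v : Fin 4 → ℝ) :
    zetaStar Sig ψ psi c v 3 = ψ * zetaTilde psi c v 3 := by
  simp [zetaStar, show zeta0 Sig 3 = 0 from rfl]

theorem zetaStar_mem {psi : Fin 4 → ℝ} (hpsi : ∀ i, 0 < psi i) {c : Fin 4 → ℝ} (hc : c 0 ≠ 0)
    (v : Fin 4 → ℝ) {ψ : ℝ} (hψ : 0 ≤ ψ) (Sig : ℝ) :
    zetaStar Sig ψ psi c v ∈ {z | (∑ i, c i * (z i - zeta0 Sig i) = 0) ∧ 0 ≤ z 3} := by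
  refine ⟨?_, ?_⟩
  · simp only [zetaStar, Pi.add_apply, Pi.smul_apply, smul_eq_mul, add_sub_cancel_left,
      mul_left_comm _ ψ, ← Finset.mul_sum, sum_mul_zetaTilde_eq_zero hpsi hc, mul_zero]
  · rw [zetaStar_three]
    exact mul_nonneg hψ (zetaTilde_three_nonneg (hpsi 3).le c v)

theorem le_lagrangian {psi : Fin 4 → ℝ} (hpsi : ∀ i, 0 < psi i) {c : Fin 4 → ℝ} (hc : c 0 ≠ 0)
    (v : Fin 4 → ℝ) {ψ : ℝ} (hψ : 0 < ψ) (Sig : ℝ) (z : Fin 4 → ℝ) :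
    -(ψ / 2) * ∑ i, v i * zetaTilde psi c v i ≤ lagrangian Sig ψ psi c v z := by
  rw [← sum_mul_shiftedV_sq hpsi hc, lagrangian_eq_diagQuadratic]
  exact le_diagQuadratic hψ hpsi _ _

theorem lagrangian_zetaStar {psi : Fin 4 → ℝ} (hpsi : ∀ i, 0 < psi i) {c : Fin 4 → ℝ}
    (hc : c 0 ≠ 0) (v : Fin 4 → ℝ) {ψ : ℝ} (hψ : ψ ≠ 0) (Sig : ℝ) :
    lagrangian Sig ψ psi c v (zetaStar Sig ψ psi c v) =
      -(ψ / 2) * ∑ i, v i * zetaTilde psi c v i := by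
  rw [← sum_mul_shiftedV_sq hpsi hc, lagrangian_eq_diagQuadratic,
    ← diagQuadratic_at_minimizer hψ fun i => (hpsi i).ne']
  congr 1
  ext i
  simp [zetaStar, zetaTilde_eq_mul_shiftedV]

theorem lagrangian_le_H1 {psi c v : Fin 4 → ℝ} {Sig ψ : ℝ} {z : Fin 4 → ℝ}
    (hz : z ∈ {z | (∑ i, c i * (z i - zeta0 Sig i) = 0) ∧ 0 ≤ z 3}) :
    lagrangian Sig ψ psi c v z ≤ H1 Sig ψ psi v z := by
  rw [lagrangian, hz.1, mul_zero, add_zero, sub_le_self_iff]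
  exact mul_nonneg (mu_nonneg psi c v) hz.2

theorem H1_zetaStar {psi : Fin 4 → ℝ} (hpsi : ∀ i, 0 < psi i) {c : Fin 4 → ℝ} (hc : c 0 ≠ 0)
    (v : Fin 4 → ℝ) {ψ : ℝ} (hψ : 0 ≤ ψ) (Sig : ℝ) :
    H1 Sig ψ psi v (zetaStar Sig ψ psi c v) = lagrangian Sig ψ psi c v (zetaStar Sig ψ psi c v) := by
  rw [lagrangian, (zetaStar_mem hpsi hc v hψ Sig).1, zetaStar_three, mul_left_comm,
    mu_mul_zetaTilde_three]
  ring

theorem lagrange_multiplier_for_H1_general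
    (Sig : ℝ) (psi c v : Fin 4 → ℝ)
    (hpsi : ∀ i, 0 < psi i) (hc : c 0 ≠ 0)
    (ψ : ℝ) (hψ : 0 < ψ) :
    0 ≤ mu psi c v ∧
    sInf (Set.range fun z : Fin 4 → ℝ =>
        H1 Sig ψ psi v z + lam psi c v * (∑ i, c i * (z i - zeta0 Sig i)) -
          mu psi c v * z 3) =
      -(ψ / 2) * ∑ i, v i * zetaTilde psi c v i ∧
    IsLeast (H1 Sig ψ psi v '' {z | (∑ i, c i * (z i - zeta0 Sig i) = 0) ∧ 0 ≤ z 3})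
      (-(ψ / 2) * ∑ i, v i * zetaTilde psi c v i) := by
  have hvalue := lagrangian_zetaStar hpsi hc v hψ.ne' Sig
  have hlower := le_lagrangian hpsi hc v hψ Sig
  refine ⟨mu_nonneg psi c v, IsLeast.csInf_eq ⟨⟨_, hvalue⟩, ?_⟩,
    ⟨⟨_, zetaStar_mem hpsi hc v hψ.le Sig, (H1_zetaStar hpsi hc v hψ.le Sig).trans hvalue⟩, ?_⟩⟩
  · rintro _ ⟨z, rfl⟩
    exact hlower z
  · rintro _ ⟨z, hz, rfl⟩
    exact (hlower z).trans (lagrangian_le_H1 hz)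

/-- `(λ, μ)` is a Lagrange multiplier for the minimization of `H₁` over `Z⁰_lin`:
`μ ≥ 0` and the infimum over all `ζ ∈ ℝ⁴` of the Lagrangian
`L₁(ζ) = H₁(ζ) + λ c^⊤(ζ - ζ⁰(Σ)) - μ ζ₄` equals `-(ψ/2) v^⊤ ζ̃`, which is the
minimal value of `H₁` over `Z⁰_lin`. -/
theorem lagrange_multiplier_for_H1
    (Sig : ℝ) (hSig : 0 < Sig) (psi c v : Fin 4 → ℝ)
    (hpsi : ∀ i, 0 < psi i) (hc : c 0 ≠ 0)
    (ψ : ℝ) (hψ : 0 < ψ) :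
    0 ≤ mu psi c v ∧
    sInf (Set.range fun z : Fin 4 → ℝ =>
        H1 Sig ψ psi v z + lam psi c v * (∑ i, c i * (z i - zeta0 Sig i)) -
          mu psi c v * z 3) =
      -(ψ / 2) * ∑ i, v i * zetaTilde psi c v i ∧
    IsLeast (H1 Sig ψ psi v '' {z | (∑ i, c i * (z i - zeta0 Sig i) = 0) ∧ 0 ≤ z 3})
      (-(ψ / 2) * ∑ i, v i * zetaTilde psi c v i) :=
  lagrange_multiplier_for_H1_general Sig psi c v hpsi hc ψ hψ

end Stmt9
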